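/- arXiv:2106.11866 — 2 statements merged into one kernel-verified Lean document; each statement's English description precedes it below -/
import Mathlib

section
/- The greedy strategy is the unique minimizing Shuffler strategy: a Shuffler strategy S satisfies f(d,S) = min_{S'} f(d,S') for all n-vectors d (and all n) if and only if S(d) has the uniform distribution on supp(d) for every nonzero n-vector d. -/
open Finset

abbrev Deck (n : ℕ) := Fin n → ℕ
abbrev Strat (n : ℕ) := Deck n → Fin n → ℝ

/-- Remove one copy of card type `j` from the deck. -/
def Deck.sub {n : ℕ} (d : Deck n) (j : Fin n) : Deck n :=
  fun i => if i = j then d i - 1 else d i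

/-- `p` is a probability distribution on `Fin n`. -/
def IsDist {n : ℕ} (p : Fin n → ℝ) : Prop :=
  (∀ i, 0 ≤ p i) ∧ ∑ i, p i = 1

/-- A Guesser strategy outputs a distribution on card types for each nonzero deck. -/
def IsGuesser {n : ℕ} (G : Strat n) : Prop :=
  ∀ d : Deck n, d ≠ 0 → IsDist (G d)

/-- A Shuffler strategy outputs a distribution supported on the support of the deck. -/
def IsShuffler {n : ℕ} (S : Strat n) : Prop :=
  ∀ d : Deck n, d ≠ 0 → IsDist (S d) ∧ ∀ i, S d i ≠ 0 → d i ≠ 0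

/-- Expected score of the game, computed with fuel `N` (the number of cards). -/
def scoreAux {n : ℕ} (G S : Strat n) : ℕ → Deck n → ℝ
  | 0, _ => 0
  | N + 1, d => ∑ j ∈ Finset.univ.filter (fun j => d j ≠ 0),
      S d j * (G d j + scoreAux G S N (d.sub j))

/-- The expected score `E[C(d,G,S)]`. -/
noncomputable def score {n : ℕ} (G S : Strat n) (d : Deck n) : ℝ :=
  scoreAux G S (∑ i, d i) d

/-- `f(d,S)`: maximum expected score over all Guesser strategies. -/
noncomputable def fval {n : ℕ} (S : Strat n) (d : Deck n) : ℝ :=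
  sSup {x | ∃ G, IsGuesser G ∧ score G S d = x}

/-- `F(d,S)`: minimum expected score over all Guesser strategies. -/
noncomputable def Fval {n : ℕ} (S : Strat n) (d : Deck n) : ℝ :=
  sInf {x | ∃ G, IsGuesser G ∧ score G S d = x}

/-- `f(d) = min_S f(d,S)`. -/
noncomputable def fopt {n : ℕ} (d : Deck n) : ℝ :=
  sInf {x | ∃ S, IsShuffler S ∧ fval S d = x}

/-- `F(d) = max_S F(d,S)`. -/
noncomputable def Fopt {n : ℕ} (d : Deck n) : ℝ :=
  sSup {x | ∃ S, IsShuffler S ∧ Fval S d = x}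

/-- The greedy Shuffler strategy: uniform on the support of the deck. -/
noncomputable def greedy {n : ℕ} : Strat n :=
  fun d i => if d i ≠ 0 then ((Finset.univ.filter fun j => d j ≠ 0).card : ℝ)⁻¹ else 0

/-!
The Guesser's best reply to a Shuffler `S` names a most likely card, so
`f(d,S) = max_j S(d)_j + ∑_j S(d)_j f(d - e_j, S)`. For the greedy value `g = f(·, greedy)` this
says `∑_{j ∈ supp d} (g d - g (d - e_j)) = 1`, and every increment `g d - g (d - e_j)` is positive
(induction on the deck, splitting on whether `d_j = 1`). Hence for a distribution `p` on `supp d`,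
`g d - ∑_j p_j g (d - e_j) = ∑_j p_j (g d - g (d - e_j)) ≤ max p`, with equality only if `p` is
constant, i.e. uniform. Induction on the deck then gives `f(d,S) ≥ g d`, and equality at every deck
forces `S` to be uniform at every deck.
-/

namespace Finset

variable {ι R : Type*} {s : Finset ι} (hs : s.Nonempty) {p w : ι → R}

theorem sum_mul_le_sup'_mul_sum [Semiring R] [LinearOrder R] [IsOrderedRing R]
    (hw : ∀ i ∈ s, 0 ≤ w i) :
    ∑ i ∈ s, p i * w i ≤ s.sup' hs p * ∑ i ∈ s, w i := by
  rw [mul_sum]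
  exact sum_le_sum fun i hi => mul_le_mul_of_nonneg_right (le_sup' p hi) (hw i hi)

theorem eq_sup'_of_sum_mul_eq_sup'_mul_sum [Ring R] [LinearOrder R] [IsStrictOrderedRing R]
    (hw : ∀ i ∈ s, 0 < w i) (h : ∑ i ∈ s, p i * w i = s.sup' hs p * ∑ i ∈ s, w i) :
    ∀ i ∈ s, p i = s.sup' hs p := by
  have hgap : ∑ i ∈ s, (s.sup' hs p - p i) * w i = 0 := by
    simp only [sub_mul, sum_sub_distrib, ← mul_sum, h, sub_self]
  intro i hi
  have hterm := (sum_eq_zero_iff_of_nonneg fun j hj =>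
    mul_nonneg (sub_nonneg.2 (le_sup' p hj)) (hw j hj).le).1 hgap i hi
  rcases mul_eq_zero.1 hterm with h' | h'
  · exact (sub_eq_zero.1 h').symm
  · exact absurd h' (hw i hi).ne'

end Finset

namespace Deck

variable {n : ℕ}

def supp (d : Deck n) : Finset (Fin n) := univ.filter fun j => d j ≠ 0

variable {d : Deck n} {i j : Fin n}

@[simp]
theorem mem_supp : j ∈ d.supp ↔ d j ≠ 0 := by simp [supp]

theorem supp_nonempty (hd : d ≠ 0) : d.supp.Nonempty := by
  obtain ⟨i, hi⟩ := Function.ne_iff.1 hd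
  exact ⟨i, mem_supp.2 hi⟩

theorem ne_zero_of_mem_supp (hj : j ∈ d.supp) : d ≠ 0 := by
  rintro rfl
  simp at hj

@[simp]
theorem supp_zero : (0 : Deck n).supp = ∅ := by ext; simp

theorem sum_sub_add_one (hj : j ∈ d.supp) : ∑ i, d.sub j i + 1 = ∑ i, d i := by
  have hsplit : d = d.sub j + Pi.single j 1 := by
    ext i
    by_cases hij : i = j
    · subst hij; simp [Deck.sub] at hj ⊢; omega
    · simp [Deck.sub, hij]
  conv_rhs => rw [hsplit]
  simp [sum_add_distrib]

theorem sub_comm (d : Deck n) (i j : Fin n) : (d.sub i).sub j = (d.sub j).sub i := by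
  ext x
  simp only [Deck.sub]
  split_ifs <;> subst_vars <;> simp_all

theorem mem_supp_of_mem_supp_sub (hi : i ∈ (d.sub j).supp) : i ∈ d.supp := by
  simp only [mem_supp, Deck.sub] at hi ⊢
  split_ifs at hi <;> omega

theorem mem_supp_sub_of_mem_supp_sub (hi : i ∈ (d.sub j).supp) (hj : j ∈ d.supp) :
    j ∈ (d.sub i).supp := by
  simp only [mem_supp, Deck.sub] at hi hj ⊢
  split_ifs at hi ⊢ <;> subst_vars <;> omega

theorem supp_sub_of_two_le (hj : 2 ≤ d j) : (d.sub j).supp = d.supp := by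
  ext i
  simp only [mem_supp, Deck.sub]
  split_ifs with h
  · subst h; omega
  · rfl

theorem supp_sub_of_eq_one (hj : d j = 1) : (d.sub j).supp = d.supp.erase j := by
  ext i
  simp only [mem_erase, mem_supp, Deck.sub]
  split_ifs with h
  · subst h; omega
  · simp [h]

@[elab_as_elim]
theorem induction_on {P : Deck n → Prop} (d : Deck n) (zero : P 0)
    (step : ∀ d : Deck n, d ≠ 0 → (∀ j ∈ d.supp, P (d.sub j)) → P d) : P d := by
  by_cases hd : d = 0
  · exact hd ▸ zero
  · exact step d hd fun j hj => induction_on (d.sub j) zero step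
termination_by ∑ i, d i
decreasing_by have := sum_sub_add_one hj; omega

end Deck

section

variable {n : ℕ} {G S S' : Strat n} {d : Deck n}

theorem score_zero : score G S 0 = 0 := by simp [score, scoreAux]

theorem score_eq_sum (hd : d ≠ 0) :
    score G S d = ∑ j ∈ d.supp, S d j * (G d j + score G S (d.sub j)) := by
  obtain ⟨N, hN⟩ : ∃ N, ∑ i, d i = N + 1 := Nat.exists_eq_add_one.2 <| Nat.pos_of_ne_zero
    fun h => hd (funext (sum_eq_zero_iff.1 h · (mem_univ _)))
  rw [score, hN, scoreAux]
  refine sum_congr rfl fun j hj => ?_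
  have := Deck.sum_sub_add_one hj
  rw [score, show ∑ i, d.sub j i = N by omega]

theorem score_congr_strat (h : ∀ e : Deck n, e ≠ 0 → S e = S' e) (G : Strat n) (d : Deck n) :
    score G S d = score G S' d := by
  induction d using Deck.induction_on with
  | zero => rw [score_zero, score_zero]
  | step d hd ih =>
    rw [score_eq_sum hd, score_eq_sum hd, h d hd]
    exact sum_congr rfl fun j hj => by rw [ih j hj]

theorem fval_congr_strat (h : ∀ e : Deck n, e ≠ 0 → S e = S' e) (d : Deck n) :
    fval S d = fval S' d := by
  simp only [fval, score_congr_strat h]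

theorem IsShuffler.sum_supp_eq_one (hS : IsShuffler S) (hd : d ≠ 0) :
    ∑ j ∈ d.supp, S d j = 1 := by
  rw [← (hS d hd).1.2, sum_subset (subset_univ _)]
  intro i _ hi
  by_contra h
  exact hi (Deck.mem_supp.2 ((hS d hd).2 i h))

noncomputable def maxGuesser (S : Strat n) : Strat n := fun d =>
  if h : d.supp.Nonempty then Pi.single (exists_mem_eq_sup' h (S d)).choose 1 else 0

theorem isGuesser_maxGuesser (S : Strat n) : IsGuesser (maxGuesser S) := by
  intro d hd
  simp only [maxGuesser, dif_pos (Deck.supp_nonempty hd)]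
  refine ⟨fun i => ?_, by simp⟩
  rw [Pi.single_apply]
  split_ifs <;> norm_num

theorem sum_mul_maxGuesser (hd : d ≠ 0) :
    ∑ j ∈ d.supp, S d j * maxGuesser S d j = d.supp.sup' (Deck.supp_nonempty hd) (S d) := by
  have hne := Deck.supp_nonempty hd
  obtain ⟨hmem, hmax⟩ := (exists_mem_eq_sup' hne (S d)).choose_spec
  simp only [maxGuesser, dif_pos hne, Pi.single_apply, mul_ite, mul_one, mul_zero]
  rw [sum_ite_eq', if_pos hmem]
  exact hmax.symm

theorem score_le_score_maxGuesser (hG : IsGuesser G) (hS : IsShuffler S) (d : Deck n) :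
    score G S d ≤ score (maxGuesser S) S d := by
  induction d using Deck.induction_on with
  | zero => rw [score_zero, score_zero]
  | step d hd ih =>
    have hne := Deck.supp_nonempty hd
    have hguess : ∑ j ∈ d.supp, S d j * G d j ≤ d.supp.sup' hne (S d) := by
      have hsum : ∑ j ∈ d.supp, G d j ≤ 1 := (hG d hd).2 ▸
        sum_le_sum_of_subset_of_nonneg (subset_univ _) fun i _ _ => (hG d hd).1 i
      have hmax : 0 ≤ d.supp.sup' hne (S d) :=
        (hS d hd).1.1 hne.choose |>.trans (le_sup' _ hne.choose_spec)
      calc ∑ j ∈ d.supp, S d j * G d j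
          ≤ d.supp.sup' hne (S d) * ∑ j ∈ d.supp, G d j :=
            sum_mul_le_sup'_mul_sum hne fun j _ => (hG d hd).1 j
        _ ≤ d.supp.sup' hne (S d) := mul_le_of_le_one_right hmax hsum
    have hrest : ∑ j ∈ d.supp, S d j * score G S (d.sub j)
        ≤ ∑ j ∈ d.supp, S d j * score (maxGuesser S) S (d.sub j) :=
      sum_le_sum fun j hj => mul_le_mul_of_nonneg_left (ih j hj) ((hS d hd).1.1 j)
    rw [score_eq_sum hd, score_eq_sum hd]
    simp only [mul_add, sum_add_distrib, sum_mul_maxGuesser hd]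
    linarith

theorem fval_eq_score_maxGuesser (hS : IsShuffler S) (d : Deck n) :
    fval S d = score (maxGuesser S) S d :=
  IsGreatest.csSup_eq ⟨⟨maxGuesser S, isGuesser_maxGuesser S, rfl⟩,
    by rintro _ ⟨G, hG, rfl⟩; exact score_le_score_maxGuesser hG hS d⟩

theorem fval_zero (hS : IsShuffler S) : fval S 0 = 0 := by
  rw [fval_eq_score_maxGuesser hS, score_zero]

theorem fval_eq_sup'_add_sum (hS : IsShuffler S) (hd : d ≠ 0) :
    fval S d = d.supp.sup' (Deck.supp_nonempty hd) (S d)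
      + ∑ j ∈ d.supp, S d j * fval S (d.sub j) := by
  simp only [fval_eq_score_maxGuesser hS, score_eq_sum hd, mul_add, sum_add_distrib,
    sum_mul_maxGuesser hd]

theorem greedy_apply_of_mem {j : Fin n} (hj : j ∈ d.supp) :
    greedy d j = ((#d.supp : ℕ) : ℝ)⁻¹ := by
  rw [greedy, if_pos (Deck.mem_supp.1 hj)]
  rfl

theorem isShuffler_greedy : IsShuffler (greedy (n := n)) := by
  intro d hd
  have hcard : ((#d.supp : ℕ) : ℝ) ≠ 0 := by
    exact_mod_cast (card_pos.2 (Deck.supp_nonempty hd)).ne'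
  refine ⟨⟨fun i => ?_, ?_⟩, fun i hi => ?_⟩
  · unfold greedy; split_ifs <;> positivity
  · rw [← sum_filter_add_sum_filter_not univ (· ∈ d.supp)]
    simp only [filter_mem_eq_inter, univ_inter]
    rw [sum_congr rfl fun j hj => greedy_apply_of_mem hj, sum_const, nsmul_eq_mul,
      mul_inv_cancel₀ hcard, add_eq_left]
    refine sum_eq_zero fun j hj => ?_
    simp only [mem_filter, Deck.mem_supp, not_not] at hj
    simp [greedy, hj]
  · by_contra h
    exact hi (by simp [greedy, h])

theorem card_mul_fval_greedy (hd : d ≠ 0) :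
    #d.supp * fval greedy d = 1 + ∑ j ∈ d.supp, fval greedy (d.sub j) := by
  have hcard : ((#d.supp : ℕ) : ℝ) ≠ 0 := by
    exact_mod_cast (card_pos.2 (Deck.supp_nonempty hd)).ne'
  rw [fval_eq_sup'_add_sum isShuffler_greedy hd,
    sup'_congr _ rfl fun j hj => greedy_apply_of_mem hj, sup'_const,
    sum_congr rfl fun j hj => by rw [greedy_apply_of_mem hj], ← mul_sum, mul_add,
    ← mul_assoc, mul_inv_cancel₀ hcard, one_mul]

theorem fval_greedy_sub_lt {j : Fin n} (hj : j ∈ d.supp) :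
    fval greedy (d.sub j) < fval greedy d := by
  induction d using Deck.induction_on generalizing j with
  | zero => simp at hj
  | step d hd ih =>
    have hIH : ∀ i ∈ (d.sub j).supp, fval greedy ((d.sub j).sub i) < fval greedy (d.sub i) :=
      fun i hi => Deck.sub_comm d i j ▸
        ih i (Deck.mem_supp_of_mem_supp_sub hi) (Deck.mem_supp_sub_of_mem_supp_sub hi hj)
    have hstep (hz : d.sub j ≠ 0) : #(d.sub j).supp * fval greedy (d.sub j)
        < 1 + ∑ i ∈ (d.sub j).supp, fval greedy (d.sub i) := by
      rw [card_mul_fval_greedy hz, add_lt_add_iff_left]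
      exact sum_lt_sum_of_nonempty (Deck.supp_nonempty hz) hIH
    refine lt_of_mul_lt_mul_left ?_ (Nat.cast_nonneg (#d.supp))
    rw [card_mul_fval_greedy hd]
    rcases Nat.lt_or_ge (d j) 2 with hj1 | hj2
    · have hj1 : d j = 1 := by have := Deck.mem_supp.1 hj; omega
      rw [← insert_erase hj, card_insert_of_notMem (notMem_erase j _),
        sum_insert (notMem_erase j _), ← Deck.supp_sub_of_eq_one hj1]
      push_cast
      by_cases hz : d.sub j = 0
      · simp [hz, fval_zero isShuffler_greedy]
      · linarith [hstep hz]
    · have hz : d.sub j ≠ 0 := Deck.ne_zero_of_mem_supp (j := j) (by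
        rwa [Deck.supp_sub_of_two_le hj2])
      rw [← Deck.supp_sub_of_two_le hj2]
      exact hstep hz

theorem sum_fval_greedy_sub_fval_greedy_sub_eq_one (hd : d ≠ 0) :
    ∑ j ∈ d.supp, (fval greedy d - fval greedy (d.sub j)) = 1 := by
  rw [sum_sub_distrib, sum_const, nsmul_eq_mul, card_mul_fval_greedy hd, add_sub_cancel_right]

theorem fval_greedy_sub_sum_mul {p : Fin n → ℝ} (hp : ∑ j ∈ d.supp, p j = 1) :
    fval greedy d - ∑ j ∈ d.supp, p j * fval greedy (d.sub j)
      = ∑ j ∈ d.supp, p j * (fval greedy d - fval greedy (d.sub j)) := by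
  simp only [mul_sub, sum_sub_distrib, ← sum_mul, hp, one_mul]

theorem fval_greedy_le_sup'_add_sum (hd : d ≠ 0) {p : Fin n → ℝ}
    (hp : ∑ j ∈ d.supp, p j = 1) :
    fval greedy d ≤ d.supp.sup' (Deck.supp_nonempty hd) p
      + ∑ j ∈ d.supp, p j * fval greedy (d.sub j) := by
  have h := sum_mul_le_sup'_mul_sum (Deck.supp_nonempty hd) (p := p)
    fun j hj => (sub_pos.2 (fval_greedy_sub_lt hj)).le
  rw [sum_fval_greedy_sub_fval_greedy_sub_eq_one hd, mul_one, ← fval_greedy_sub_sum_mul hp] at h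
  linarith

theorem eq_inv_card_of_fval_greedy_eq_sup'_add_sum (hd : d ≠ 0) {p : Fin n → ℝ}
    (hp : ∑ j ∈ d.supp, p j = 1)
    (h : fval greedy d = d.supp.sup' (Deck.supp_nonempty hd) p
      + ∑ j ∈ d.supp, p j * fval greedy (d.sub j)) :
    ∀ j ∈ d.supp, p j = ((#d.supp : ℕ) : ℝ)⁻¹ := by
  have hconst := eq_sup'_of_sum_mul_eq_sup'_mul_sum (Deck.supp_nonempty hd) (p := p)
    (fun j hj => sub_pos.2 (fval_greedy_sub_lt hj)) (by
      rw [sum_fval_greedy_sub_fval_greedy_sub_eq_one hd, mul_one, ← fval_greedy_sub_sum_mul hp]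
      linarith)
  have hcard : #d.supp * d.supp.sup' (Deck.supp_nonempty hd) p = 1 := by
    rw [← hp, sum_congr rfl hconst, sum_const, nsmul_eq_mul]
  intro j hj
  rw [hconst j hj, eq_inv_of_mul_eq_one_right hcard]

theorem fval_greedy_le_fval (hS : IsShuffler S) (d : Deck n) : fval greedy d ≤ fval S d := by
  induction d using Deck.induction_on with
  | zero => rw [fval_zero isShuffler_greedy, fval_zero hS]
  | step d hd ih =>
    calc fval greedy d
        ≤ d.supp.sup' (Deck.supp_nonempty hd) (S d)
            + ∑ j ∈ d.supp, S d j * fval greedy (d.sub j) :=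
          fval_greedy_le_sup'_add_sum hd (hS.sum_supp_eq_one hd)
      _ ≤ fval S d := by
          rw [fval_eq_sup'_add_sum hS hd, add_le_add_iff_left]
          exact sum_le_sum fun j hj => mul_le_mul_of_nonneg_left (ih j hj) ((hS d hd).1.1 j)

theorem fopt_eq_fval_greedy (d : Deck n) : fopt d = fval greedy d :=
  IsLeast.csInf_eq ⟨⟨greedy, isShuffler_greedy, rfl⟩,
    by rintro _ ⟨S, hS, rfl⟩; exact fval_greedy_le_fval hS d⟩

theorem IsShuffler.eq_greedy (hS : IsShuffler S) (hd : d ≠ 0)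
    (h : ∀ j ∈ d.supp, S d j = ((#d.supp : ℕ) : ℝ)⁻¹) : S d = greedy d := by
  ext i
  by_cases hi : i ∈ d.supp
  · rw [h i hi, greedy_apply_of_mem hi]
  · have hdi : d i = 0 := by simpa using hi
    rw [show S d i = 0 by by_contra h'; exact (hS d hd).2 i h' hdi]
    simp [greedy, hdi]

end

/-- a Shuffler strategy is a minimizing Shuffler strategy iff it is the
greedy strategy (uniform on the support) on every nonzero deck. -/
theorem stmt7 (S : ∀ n, Strat n) (hS : ∀ n, IsShuffler (S n)) :
    (∀ (n : ℕ) (d : Deck n), d ≠ 0 → fval (S n) d = fopt d) ↔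
      (∀ (n : ℕ) (d : Deck n), d ≠ 0 → S n d = greedy d) := by
  simp only [fopt_eq_fval_greedy]
  refine ⟨fun hopt n d hd => ?_, fun hgreedy n d _ => fval_congr_strat (hgreedy n) d⟩
  have hval (e : Deck n) : fval (S n) e = fval greedy e := by
    by_cases he : e = 0
    · rw [he, fval_zero (hS n), fval_zero isShuffler_greedy]
    · exact hopt n e he
  have hrec := fval_eq_sup'_add_sum (hS n) hd
  simp only [hval] at hrec
  exact (hS n).eq_greedy hd
    (eq_inv_card_of_fval_greedy_eq_sup'_add_sum hd ((hS n).sum_supp_eq_one hd) hrec)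
end

section
/- In the Restricted Matching Pennies game with deck vectors a and b satisfying Σa_i = Σb_i = N, if one player uses the uniform strategy U (choosing card type i with probability a_i/Σa_j from their remaining deck), then for any strategy of the other player the expected number of matches equals Σ_{i∈[n]} a_i b_i / N. -/
open Finset

/-- A strategy in the Restricted Matching Pennies game: given one's own deck and the
opponent's deck, output a distribution supported on one's own remaining deck. -/
def IsMStrat {n : ℕ} (A : Deck n → Deck n → Fin n → ℝ) : Prop :=
  ∀ a b : Deck n, a ≠ 0 → IsDist (A a b) ∧ ∀ i, A a b i ≠ 0 → a i ≠ 0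

/-- Expected number of matches, computed with fuel `N`. -/
def mscoreAux {n : ℕ} (A B : Deck n → Deck n → Fin n → ℝ) : ℕ → Deck n → Deck n → ℝ
  | 0, _, _ => 0
  | N + 1, a, b =>
      ∑ i ∈ Finset.univ.filter (fun i => a i ≠ 0), ∑ j ∈ Finset.univ.filter (fun j => b j ≠ 0),
        A a b i * B b a j * ((if i = j then 1 else 0) + mscoreAux A B N (a.sub i) (b.sub j))

/-- The expected match count `E[M(a,b,A,B)]`. -/
noncomputable def mscore {n : ℕ} (A B : Deck n → Deck n → Fin n → ℝ) (a b : Deck n) : ℝ :=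
  mscoreAux A B (∑ i, a i) a b

/-- The uniform strategy: choose a uniformly random card from one's own remaining deck. -/
noncomputable def uniformStrat {n : ℕ} : Deck n → Deck n → Fin n → ℝ :=
  fun a _ i => (a i : ℝ) / (∑ k, (a k : ℝ))

lemma sum_deck_sub {n : ℕ} (d : Deck n) (j : Fin n) (hj : d j ≠ 0) :
    ∑ i, d.sub j i = (∑ i, d i) - 1 := by
  rw [← Finset.add_sum_erase _ d (Finset.mem_univ j),
      ← Finset.add_sum_erase _ (d.sub j) (Finset.mem_univ j)]
  have h1 : ∑ i ∈ Finset.univ.erase j, d.sub j i = ∑ i ∈ Finset.univ.erase j, d i :=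
    Finset.sum_congr rfl fun i hi => by
      simp [Deck.sub, Finset.ne_of_mem_erase hi]
  rw [h1]
  have h2 : d.sub j j = d j - 1 := by simp [Deck.sub]
  rw [h2]
  omega

lemma cast_deck_sub {n : ℕ} (d : Deck n) (j : Fin n) (hj : d j ≠ 0) (i : Fin n) :
    ((d.sub j i : ℕ) : ℝ) = (d i : ℝ) - (if i = j then 1 else 0) := by
  simp only [Deck.sub]
  split
  · next h =>
    subst h
    have : 1 ≤ d i := Nat.one_le_iff_ne_zero.mpr hj
    push_cast [this]
    ring
  · simp

lemma dot_sub {n : ℕ} (a b : Deck n) (i j : Fin n) (hi : a i ≠ 0) (hj : b j ≠ 0) :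
    ∑ k, ((a.sub i) k : ℝ) * ((b.sub j) k : ℝ)
      = (∑ k, (a k : ℝ) * (b k : ℝ)) - b i - a j + (if i = j then 1 else 0) := by
  have hterm : ∀ k, ((a.sub i) k : ℝ) * ((b.sub j) k : ℝ)
      = (a k : ℝ) * (b k : ℝ) - (if k = i then (b k : ℝ) else 0)
        - (if k = j then (a k : ℝ) else 0)
        + (if k = i then (1:ℝ) else 0) * (if k = j then (1:ℝ) else 0) := fun k => by
    rw [cast_deck_sub a i hi, cast_deck_sub b j hj]
    split_ifs <;> ring
  rw [Finset.sum_congr rfl fun k _ => hterm k, Finset.sum_add_distrib,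
    Finset.sum_sub_distrib, Finset.sum_sub_distrib]
  congr 1
  · congr 1 <;> simp [Finset.sum_ite_eq']
  · by_cases h : i = j
    · subst h; simp [ite_mul, Finset.sum_ite_eq']
    · simp [ite_mul, Finset.sum_ite_eq', h, Ne.symm h]

lemma mscoreAux_comm {n : ℕ} (A B : Deck n → Deck n → Fin n → ℝ) :
    ∀ (M : ℕ) (a b : Deck n), mscoreAux A B M a b = mscoreAux B A M b a := by
  intro M
  induction M with
  | zero => intro a b; simp [mscoreAux]
  | succ N ih =>
    intro a b
    rw [mscoreAux, mscoreAux, Finset.sum_comm]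
    refine Finset.sum_congr rfl fun j _ => Finset.sum_congr rfl fun i _ => ?_
    rw [ih]
    have h : (if i = j then (1:ℝ) else 0) = (if j = i then 1 else 0) := by
      simp [eq_comm]
    rw [h]
    ring

lemma key {n : ℕ} (A : Deck n → Deck n → Fin n → ℝ) (hA : IsMStrat A) :
    ∀ (M : ℕ) (a b : Deck n), (∑ i, a i) = M → (∑ i, b i) = M →
      mscoreAux A uniformStrat M a b = (∑ i, (a i : ℝ) * (b i : ℝ)) / (M : ℝ) := by
  intro M
  induction M with
  | zero =>
    intro a b _ _
    simp [mscoreAux]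
  | succ N ih =>
    intro a b ha hb
    have hane : a ≠ 0 := by
      intro h
      rw [h] at ha
      simp at ha
    obtain ⟨⟨hApos, hAsum⟩, hAsupp⟩ := hA a b hane
    set S : ℝ := ∑ i, (a i : ℝ) * (b i : ℝ) with hS
    have hbR : ∑ k, ((b k : ℕ) : ℝ) = (N : ℝ) + 1 := by
      rw [← Nat.cast_sum, hb]; push_cast; ring
    have hfilA : ∑ i ∈ Finset.univ.filter (fun i => a i ≠ 0), A a b i = 1 := by
      rw [Finset.sum_filter_of_ne (fun i _ hAi => hAsupp i hAi), hAsum]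
    have hterm : ∀ i ∈ Finset.univ.filter (fun i : Fin n => a i ≠ 0),
        (∑ j ∈ Finset.univ.filter (fun j => b j ≠ 0),
          A a b i * uniformStrat b a j *
            ((if i = j then 1 else 0) + mscoreAux A uniformStrat N (a.sub i) (b.sub j)))
        = A a b i * (S / ((N:ℝ)+1)) := by
      intro i hi
      rw [Finset.mem_filter] at hi
      have hi' := hi.2
      have h1 : ∀ j ∈ Finset.univ.filter (fun j : Fin n => b j ≠ 0),
          A a b i * uniformStrat b a j *
            ((if i = j then 1 else 0) + mscoreAux A uniformStrat N (a.sub i) (b.sub j))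
          = A a b i * ((b j : ℝ) * (((if i = j then (1:ℝ) else 0)
              + (S - b i - a j + (if i = j then 1 else 0)) / (N:ℝ)) / ((N:ℝ)+1))) := by
        intro j hj
        rw [Finset.mem_filter] at hj
        have hj' := hj.2
        have hsa : ∑ k, a.sub i k = N := by rw [sum_deck_sub a i hi', ha]; omega
        have hsb : ∑ k, b.sub j k = N := by rw [sum_deck_sub b j hj', hb]; omega
        rw [ih (a.sub i) (b.sub j) hsa hsb, dot_sub a b i j hi' hj']
        unfold uniformStrat
        rw [hbR, ← hS]
        ring
      rw [Finset.sum_congr rfl h1, ← Finset.mul_sum]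
      congr 1
      rw [Finset.sum_filter_of_ne (fun j _ hfj => by
        intro hbj
        apply hfj
        rw [hbj]
        simp)]
      have h3 : ∑ j, (b j : ℝ) * (S - b i - a j + (if i = j then 1 else 0))
          = (N:ℝ) * (S - b i) := by
        have e : ∀ j, (b j : ℝ) * (S - b i - a j + (if i = j then 1 else 0))
            = (b j : ℝ) * S - (b j : ℝ) * (b i) - (a j : ℝ) * (b j : ℝ)
              + (if i = j then (b j : ℝ) else 0) := fun j => by
          split_ifs <;> ring
        rw [Finset.sum_congr rfl fun j _ => e j, Finset.sum_add_distrib,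
          Finset.sum_sub_distrib, Finset.sum_sub_distrib, ← Finset.sum_mul,
          ← Finset.sum_mul, hbR, ← hS, Finset.sum_ite_eq]
        simp
        ring
      have h4 : ((N:ℝ) * (S - b i)) / (N:ℝ) = S - b i := by
        rcases Nat.eq_zero_or_pos N with h | h
        · subst h
          have ha1 : ∑ k, a k = 1 := ha
          have hzero : ∀ k, k ≠ i → a k = 0 := by
            intro k hk
            by_contra hak
            have h5 : a i + ∑ k ∈ Finset.univ.erase i, a k = ∑ k, a k :=
              Finset.add_sum_erase _ a (Finset.mem_univ i)
            have h6 : a k ≤ ∑ k ∈ Finset.univ.erase i, a k :=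
              Finset.single_le_sum (fun _ _ => Nat.zero_le _)
                (Finset.mem_erase.mpr ⟨hk, Finset.mem_univ k⟩)
            omega
          have hai : a i = 1 := by
            have h5 : a i + ∑ k ∈ Finset.univ.erase i, a k = ∑ k, a k :=
              Finset.add_sum_erase _ a (Finset.mem_univ i)
            have h6 : ∑ k ∈ Finset.univ.erase i, a k = 0 :=
              Finset.sum_eq_zero fun k hk => hzero k (Finset.ne_of_mem_erase hk)
            omega
          have hSb : S = b i := by
            rw [hS, Finset.sum_eq_single i
              (fun k _ hki => by rw [hzero k hki]; simp)
              (fun h => absurd (Finset.mem_univ i) h), hai]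
            simp
          rw [hSb]
          simp
        · have hN : (N:ℝ) ≠ 0 := Nat.cast_ne_zero.mpr h.ne'
          field_simp
      have h5 : ∀ j, (b j : ℝ) * (((if i = j then (1:ℝ) else 0)
            + (S - b i - a j + (if i = j then 1 else 0)) / (N:ℝ)) / ((N:ℝ)+1))
          = ((b j : ℝ) * (if i = j then (1:ℝ) else 0)
            + (b j : ℝ) * (S - b i - a j + (if i = j then 1 else 0)) / (N:ℝ)) / ((N:ℝ)+1) :=
        fun j => by ring
      rw [Finset.sum_congr rfl fun j _ => h5 j, ← Finset.sum_div,
        Finset.sum_add_distrib, ← Finset.sum_div, h3, h4]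
      have h6 : ∑ j, (b j : ℝ) * (if i = j then (1:ℝ) else 0) = b i := by
        simp [mul_ite, Finset.sum_ite_eq]
      rw [h6]
      ring
    rw [mscoreAux, Finset.sum_congr rfl hterm, ← Finset.sum_mul, hfilA, one_mul]
    push_cast
    ring

/-- if either player plays the uniform strategy, the expected number of
matches is `∑ a_i b_i / N`, regardless of the other player's strategy. -/
theorem stmt12 {n : ℕ} (a b : Deck n) (N : ℕ) (ha : ∑ i, a i = N) (hb : ∑ i, b i = N)
    (A B : Deck n → Deck n → Fin n → ℝ) (hA : IsMStrat A) (hB : IsMStrat B) :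
    mscore A uniformStrat a b = (∑ i, (a i : ℝ) * (b i : ℝ)) / (N : ℝ) ∧
      mscore uniformStrat B a b = (∑ i, (a i : ℝ) * (b i : ℝ)) / (N : ℝ) := by
  constructor
  · rw [mscore, ha]
    exact key A hA N a b ha hb
  · rw [mscore, ha, mscoreAux_comm, key B hB N b a hb ha]
    congr 1
    exact Finset.sum_congr rfl fun i _ => mul_comm _ _
end
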